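/- arXiv:1712.01922 — 2 statements merged into one kernel-verified Lean document; each statement's English description precedes it below -/
import Mathlib

section
/- Let C be a monoidal category and A = (A, μ, η, Δ, ε) a Frobenius algebra object in C. Then the induction functor I : C → Mod_A, x ↦ A ⊗ x, is right adjoint to the forgetful functor U : Mod_A → C. The adjunction bijections are given by ψ(f) = (ε ⊗ id_x) ∘ f for f : m → I(x) in Mod_A, and φ(g) = (id_A ⊗ (g ∘ ρ_m)) ∘ ((Δ ∘ η) ⊗ id_m) for g : U(m) → x in C, and these maps are mutually inverse. -/
/-!
For a module `M`, the map `coaction Δ M = (λ⁻¹ ≫ (η ≫ Δ) ▷ M ≫ α ≫ A ◁ γ) : M ⟶ A ⊗ M` is the unit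
of the adjunction `U ⊣ I`, and `φ g = coaction Δ M ≫ A ◁ g`. Both Frobenius relations say that
`coaction` is a module map into the induced module; it is natural in module maps, and on an induced
module `A ⊗ x` it reduces to `Δ ▷ x`. The two counit laws of `Δ` are then the triangle identities,
i.e. `ψ ∘ φ = id` and `φ ∘ ψ = id`.
-/
open CategoryTheory MonoidalCategory MonObj

universe v u

namespace Frobenius

variable {C : Type u} [Category.{v} C] [MonoidalCategory C] {A : C} [MonObj A]

abbrev inducedModObj (x : C) : ModObj A (A ⊗ x) where
  smul := (α_ A A x).inv ≫ (μ ▷ x)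
  one_smul := by
    simp [← comp_whiskerRight]
  mul_smul := by
    simp [← comp_whiskerRight, MonObj.mul_assoc]
    monoidal

attribute [local instance] inducedModObj

theorem isModHom_whiskerLeft {x y : C} (g : x ⟶ y) : IsModHom A (A ◁ g) where
  smul_hom := by
    change ((α_ A A x).inv ≫ (μ ▷ x)) ≫ (A ◁ g) = (A ◁ A ◁ g) ≫ (α_ A A y).inv ≫ (μ ▷ y)
    rw [Category.assoc, ← whisker_exchange, associator_inv_naturality_right_assoc]

variable (Δ : A ⟶ A ⊗ A)

theorem unit_comul_whiskerRight_mul (hfrob : (Δ ▷ A) ≫ (α_ A A A).hom ≫ (A ◁ μ) = μ ≫ Δ) :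
    (λ_ A).inv ≫ ((η ≫ Δ) ▷ A) ≫ (α_ A A A).hom ≫ (A ◁ μ) = Δ := by
  rw [comp_whiskerRight]
  slice_lhs 3 5 => rw [hfrob]
  simp

theorem unit_comul_whiskerLeft_mul (hfrob : (A ◁ Δ) ≫ (α_ A A A).inv ≫ (μ ▷ A) = μ ≫ Δ) :
    (ρ_ A).inv ≫ (A ◁ (η ≫ Δ)) ≫ (α_ A A A).inv ≫ (μ ▷ A) = Δ := by
  rw [whiskerLeft_comp]
  slice_lhs 3 5 => rw [hfrob]
  simp

def coaction (M : C) [ModObj A M] : M ⟶ A ⊗ M :=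
  (λ_ M).inv ≫ ((η ≫ Δ) ▷ M) ≫ (α_ A A M).hom ≫ (A ◁ γ[A, M])

variable {Δ}

theorem smul_comp_coaction (hfrob : (Δ ▷ A) ≫ (α_ A A A).hom ≫ (A ◁ μ) = μ ≫ Δ)
    (M : C) [ModObj A M] :
    γ[A, M] ≫ coaction Δ M = (Δ ▷ M) ≫ (α_ A A M).hom ≫ (A ◁ γ[A, M]) := by
  calc γ[A, M] ≫ coaction Δ M
      = (λ_ (A ⊗ M)).inv ≫ (𝟙_ C ◁ γ[A, M]) ≫ ((η ≫ Δ) ▷ M) ≫ (α_ A A M).hom ≫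
          (A ◁ γ[A, M]) := by
        simp [coaction]
    _ = (λ_ (A ⊗ M)).inv ≫ ((η ≫ Δ) ▷ (A ⊗ M)) ≫ (α_ A A (A ⊗ M)).hom ≫
          (A ◁ (A ◁ γ[A, M] ≫ γ[A, M])) := by
        rw [whisker_exchange_assoc]
        monoidal
    _ = (((λ_ A).inv ≫ ((η ≫ Δ) ▷ A) ≫ (α_ A A A).hom ≫ (A ◁ μ)) ▷ M) ≫ (α_ A A M).hom ≫
          (A ◁ γ[A, M]) := by
        rw [ModObj.mul_smul_self_flip]
        monoidal
    _ = (Δ ▷ M) ≫ (α_ A A M).hom ≫ (A ◁ γ[A, M]) := by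
        rw [unit_comul_whiskerRight_mul Δ hfrob]

theorem whiskerLeft_coaction_mul (hfrob : (A ◁ Δ) ≫ (α_ A A A).inv ≫ (μ ▷ A) = μ ≫ Δ)
    (M : C) [ModObj A M] :
    (A ◁ coaction Δ M) ≫ (α_ A A M).inv ≫ (μ ▷ M) = (Δ ▷ M) ≫ (α_ A A M).hom ≫ (A ◁ γ[A, M]) := by
  calc (A ◁ coaction Δ M) ≫ (α_ A A M).inv ≫ (μ ▷ M)
      = (A ◁ (λ_ M).inv) ≫ (A ◁ ((η ≫ Δ) ▷ M)) ≫ (A ◁ (α_ A A M).hom) ≫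
          (α_ A A (A ⊗ M)).inv ≫ ((A ⊗ A) ◁ γ[A, M]) ≫ (μ ▷ M) := by
        simp [coaction]
    _ = (((ρ_ A).inv ≫ (A ◁ (η ≫ Δ)) ≫ (α_ A A A).inv ≫ (μ ▷ A)) ▷ M) ≫ (α_ A A M).hom ≫
          (A ◁ γ[A, M]) := by
        rw [whisker_exchange]
        monoidal
    _ = (Δ ▷ M) ≫ (α_ A A M).hom ≫ (A ◁ γ[A, M]) := by
        rw [unit_comul_whiskerLeft_mul Δ hfrob]

theorem isModHom_coaction (hfrob₁ : (Δ ▷ A) ≫ (α_ A A A).hom ≫ (A ◁ μ) = μ ≫ Δ)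
    (hfrob₂ : (A ◁ Δ) ≫ (α_ A A A).inv ≫ (μ ▷ A) = μ ≫ Δ) (M : C) [ModObj A M] :
    IsModHom A (coaction Δ M) where
  smul_hom := (smul_comp_coaction hfrob₁ M).trans (whiskerLeft_coaction_mul hfrob₂ M).symm

theorem coaction_counit {ε : A ⟶ 𝟙_ C} (hcounit : Δ ≫ (ε ▷ A) ≫ (λ_ A).hom = 𝟙 A)
    (M : C) [ModObj A M] : coaction Δ M ≫ (ε ▷ M) ≫ (λ_ M).hom = 𝟙 M := by
  calc coaction Δ M ≫ (ε ▷ M) ≫ (λ_ M).hom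
      = (λ_ M).inv ≫ ((η ≫ Δ ≫ (ε ▷ A) ≫ (λ_ A).hom) ▷ M) ≫ γ[A, M] := by
        simp only [coaction, Category.assoc]
        rw [whisker_exchange_assoc]
        monoidal
    _ = 𝟙 M := by
        rw [hcounit, Category.comp_id, ModObj.one_smul_self, Iso.inv_hom_id]

theorem coaction_naturality {M N : C} [ModObj A M] [ModObj A N] (f : M ⟶ N) [IsModHom A f] :
    coaction Δ M ≫ (A ◁ f) = f ≫ coaction Δ N := by
  calc coaction Δ M ≫ (A ◁ f)
      = (λ_ M).inv ≫ ((η ≫ Δ) ▷ M) ≫ (α_ A A M).hom ≫ (A ◁ (A ◁ f ≫ γ[A, N])) := by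
        simp only [coaction, Category.assoc, ← whiskerLeft_comp, IsModHom.smul_hom,
          selfLeftAction_actionHomRight]
    _ = f ≫ coaction Δ N := by
        simp only [coaction, whiskerLeft_comp]
        rw [leftUnitor_inv_naturality_assoc, whisker_exchange_assoc]
        simp

theorem coaction_induced (hfrob : (Δ ▷ A) ≫ (α_ A A A).hom ≫ (A ◁ μ) = μ ≫ Δ) (x : C) :
    coaction Δ (A ⊗ x) = (Δ ▷ x) ≫ (α_ A A x).hom := by
  calc coaction Δ (A ⊗ x)
      = (((λ_ A).inv ≫ ((η ≫ Δ) ▷ A) ≫ (α_ A A A).hom ≫ (A ◁ μ)) ▷ x) ≫ (α_ A A x).hom := by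
        change _ ≫ _ ≫ _ ≫ (A ◁ ((α_ A A x).inv ≫ (μ ▷ x))) = _
        monoidal
    _ = (Δ ▷ x) ≫ (α_ A A x).hom := by
        rw [unit_comul_whiskerRight_mul Δ hfrob]

theorem coaction_induced_counit {ε : A ⟶ 𝟙_ C}
    (hfrob : (Δ ▷ A) ≫ (α_ A A A).hom ≫ (A ◁ μ) = μ ≫ Δ)
    (hcounit : Δ ≫ (A ◁ ε) ≫ (ρ_ A).hom = 𝟙 A) (x : C) :
    coaction Δ (A ⊗ x) ≫ (A ◁ ((ε ▷ x) ≫ (λ_ x).hom)) = 𝟙 (A ⊗ x) := by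
  calc coaction Δ (A ⊗ x) ≫ (A ◁ ((ε ▷ x) ≫ (λ_ x).hom))
      = (Δ ≫ (A ◁ ε) ≫ (ρ_ A).hom) ▷ x := by
        rw [coaction_induced hfrob]
        monoidal
    _ = 𝟙 (A ⊗ x) := by rw [hcounit, id_whiskerRight]

end Frobenius

theorem induction_right_adjoint_to_forget_general
    {C : Type u} [Category.{v} C] [MonoidalCategory C] (A : Mon C)
    (Δ : A.X ⟶ A.X ⊗ A.X) (ε : A.X ⟶ 𝟙_ C)
    -- coalgebra axioms
    (hcounit_l : Δ ≫ (ε ▷ A.X) ≫ (λ_ A.X).hom = 𝟙 A.X)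
    (hcounit_r : Δ ≫ (A.X ◁ ε) ≫ (ρ_ A.X).hom = 𝟙 A.X)
    -- Frobenius compatibility
    (hfrob₁ : (Δ ▷ A.X) ≫ (α_ A.X A.X A.X).hom ≫ (A.X ◁ MonObj.mul (X := A.X)) = MonObj.mul (X := A.X) ≫ Δ)
    (hfrob₂ : (A.X ◁ Δ) ≫ (α_ A.X A.X A.X).inv ≫ (MonObj.mul (X := A.X) ▷ A.X) = MonObj.mul (X := A.X) ≫ Δ)
    (x : C) (m : Mod C A.X) :
    let ψ : (m.X ⟶ A.X ⊗ x) → (m.X ⟶ x) :=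
      fun f => f ≫ (ε ▷ x) ≫ (λ_ x).hom
    let φ : (m.X ⟶ x) → (m.X ⟶ A.X ⊗ x) :=
      fun g => (λ_ m.X).inv ≫ ((MonObj.one (X := A.X) ≫ Δ) ▷ m.X) ≫ (α_ A.X A.X m.X).hom ≫
        (A.X ◁ (ModObj.smul (M := A.X) (X := m.X) ≫ g))
    -- φ g is a morphism of A-modules from m to the induced module I(x) = A ⊗ x
    (∀ g : m.X ⟶ x,
        ModObj.smul (M := A.X) (X := m.X) ≫ φ g = (A.X ◁ φ g) ≫ ((α_ A.X A.X x).inv ≫ (MonObj.mul (X := A.X) ▷ x))) ∧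
    -- ψ and φ are mutually inverse
    (∀ g : m.X ⟶ x, ψ (φ g) = g) ∧
    (∀ f : m.X ⟶ A.X ⊗ x,
        ModObj.smul (M := A.X) (X := m.X) ≫ f = (A.X ◁ f) ≫ ((α_ A.X A.X x).inv ≫ (MonObj.mul (X := A.X) ▷ x)) →
          φ (ψ f) = f) := by
  intro ψ φ
  let _ := Frobenius.inducedModObj (A := A.X) x
  have hφ (g : m.X ⟶ x) : φ g = Frobenius.coaction Δ m.X ≫ (A.X ◁ g) := by
    simp [φ, Frobenius.coaction]
  refine ⟨fun g => ?_, fun g => ?_, fun f hf => ?_⟩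
  · let _ := Frobenius.inducedModObj (A := A.X) m.X
    have := Frobenius.isModHom_coaction hfrob₁ hfrob₂ m.X
    have := Frobenius.isModHom_whiskerLeft (A := A.X) g
    rw [hφ]
    exact IsModHom.smul_hom
  · calc ψ (φ g) = (Frobenius.coaction Δ m.X ≫ (ε ▷ m.X) ≫ (λ_ m.X).hom) ≫ g := by
          simp [ψ, hφ, whisker_exchange_assoc]
      _ = g := by rw [Frobenius.coaction_counit hcounit_l, Category.id_comp]
  · have : IsModHom A.X f := ⟨hf⟩
    calc φ (ψ f) = Frobenius.coaction Δ m.X ≫ (A.X ◁ f) ≫ (A.X ◁ ((ε ▷ x) ≫ (λ_ x).hom)) := by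
          simp [ψ, hφ]
      _ = f := by
          rw [reassoc_of% Frobenius.coaction_naturality (Δ := Δ) f,
            Frobenius.coaction_induced_counit hfrob₁ hcounit_r, Category.comp_id]

/-- for a Frobenius algebra object `A = (A, μ, η, Δ, ε)` in a monoidal category,
the induction functor `I : C → Mod_A`, `x ↦ A ⊗ x`, is right adjoint to the forgetful functor
`U : Mod_A → C`, with adjunction bijections `ψ(f) = (ε ⊗ id_x) ∘ f` for a module morphism
`f : m → I(x)` and `φ(g) = (id_A ⊗ (g ∘ ρ_m)) ∘ ((Δ ∘ η) ⊗ id_m)` for `g : U(m) → x`;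
these maps are mutually inverse (and `φ(g)` is a module morphism). -/
theorem induction_right_adjoint_to_forget
    {C : Type u} [Category.{v} C] [MonoidalCategory C] (A : Mon C)
    (Δ : A.X ⟶ A.X ⊗ A.X) (ε : A.X ⟶ 𝟙_ C)
    -- coalgebra axioms
    (hcoassoc : Δ ≫ (Δ ▷ A.X) ≫ (α_ A.X A.X A.X).hom = Δ ≫ (A.X ◁ Δ))
    (hcounit_l : Δ ≫ (ε ▷ A.X) ≫ (λ_ A.X).hom = 𝟙 A.X)
    (hcounit_r : Δ ≫ (A.X ◁ ε) ≫ (ρ_ A.X).hom = 𝟙 A.X)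
    -- Frobenius compatibility
    (hfrob₁ : (Δ ▷ A.X) ≫ (α_ A.X A.X A.X).hom ≫ (A.X ◁ MonObj.mul (X := A.X)) = MonObj.mul (X := A.X) ≫ Δ)
    (hfrob₂ : (A.X ◁ Δ) ≫ (α_ A.X A.X A.X).inv ≫ (MonObj.mul (X := A.X) ▷ A.X) = MonObj.mul (X := A.X) ≫ Δ)
    (x : C) (m : Mod C A.X) :
    let ψ : (m.X ⟶ A.X ⊗ x) → (m.X ⟶ x) :=
      fun f => f ≫ (ε ▷ x) ≫ (λ_ x).hom
    let φ : (m.X ⟶ x) → (m.X ⟶ A.X ⊗ x) :=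
      fun g => (λ_ m.X).inv ≫ ((MonObj.one (X := A.X) ≫ Δ) ▷ m.X) ≫ (α_ A.X A.X m.X).hom ≫
        (A.X ◁ (ModObj.smul (M := A.X) (X := m.X) ≫ g))
    -- φ g is a morphism of A-modules from m to the induced module I(x) = A ⊗ x
    (∀ g : m.X ⟶ x,
        ModObj.smul (M := A.X) (X := m.X) ≫ φ g = (A.X ◁ φ g) ≫ ((α_ A.X A.X x).inv ≫ (MonObj.mul (X := A.X) ▷ x))) ∧
    -- ψ and φ are mutually inverse
    (∀ g : m.X ⟶ x, ψ (φ g) = g) ∧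
    (∀ f : m.X ⟶ A.X ⊗ x,
        ModObj.smul (M := A.X) (X := m.X) ≫ f = (A.X ◁ f) ≫ ((α_ A.X A.X x).inv ≫ (MonObj.mul (X := A.X) ▷ x)) →
          φ (ψ f) = f) :=
  induction_right_adjoint_to_forget_general A Δ ε hcounit_l hcounit_r hfrob₁ hfrob₂ x m
end

section
/- Let C be a braided monoidal category and Z(C) its Drinfeld center, with braiding on Z(C) given by half-braidings. For objects u, v, x, y of C, equip u ⊗ v and x ⊗ y with the half-braidings γ_{u⊗v;c} = (β_{c,u}^{-1} ⊗ id_v) ∘ (id_u ⊗ β_{v,c}). Then the family φ_{u,v,x,y} := id_u ⊗ β_{v,x} ⊗ id_y makes the assignment (u, v) ↦ (u ⊗ v, γ_{u⊗v}) into a braided monoidal functor from C̄ ⊠ C to Z(C); i.e. φ intertwines the braiding β^{-1}_{u,x} ⊗ β_{v,y} of C̄ ⊠ C with the half-braiding braiding of Z(C): φ_{x,y,u,v} ∘ c^Z_{u⊗v, x⊗y} = (β_{u,x}^{-1} ⊗ β_{v,y}) ∘ φ_{u,v,x,y}. -/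
/-!
By the hexagon axioms, `γ_{u⊗v; x⊗y}` is the composite of `β_{v,x}`, `β_{v,y}`, `β_{x,u}⁻¹` and
`β_{y,u}⁻¹`. The last of these is undone by `φ_{x,y,u,v}`, and the remaining `β_{v,y}` and
`β_{x,u}⁻¹` act on disjoint tensor factors, so by the interchange law they assemble into
`β_{x,u}⁻¹ ⊗ β_{v,y}` after `φ_{u,v,x,y}`.
-/

open CategoryTheory MonoidalCategory

universe v u

variable {C : Type u} [Category.{v} C] [MonoidalCategory C] [BraidedCategory C]

/-- The half-braiding `γ_{u⊗v;c} = (β_{c,u}^{-1} ⊗ id_v) ∘ (id_u ⊗ β_{v,c})` on `u ⊗ v`. -/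
noncomputable def halfBraidingG (u v c : C) : (u ⊗ v) ⊗ c ⟶ c ⊗ (u ⊗ v) :=
  (α_ u v c).hom ≫ (u ◁ (β_ v c).hom) ≫ (α_ u c v).inv ≫ ((β_ c u).inv ▷ v) ≫
    (α_ c u v).hom

/-- The monoidal structure morphism `φ_{u,v,x,y} := id_u ⊗ β_{v,x} ⊗ id_y` of the
canonical functor `C̄ ⊠ C → Z(C)`. -/
noncomputable def phiG (u v x y : C) : (u ⊗ v) ⊗ (x ⊗ y) ⟶ (u ⊗ x) ⊗ (v ⊗ y) :=
  (α_ u v (x ⊗ y)).hom ≫ (u ◁ (α_ v x y).inv) ≫ (u ◁ ((β_ v x).hom ▷ y)) ≫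
    (u ◁ (α_ x v y).hom) ≫ (α_ u x (v ⊗ y)).inv

lemma phiG_eq_whiskerLeft_whiskerRight (u v x y : C) :
    phiG u v x y = 𝟙 _ ⊗≫ u ◁ (β_ v x).hom ▷ y ⊗≫ 𝟙 _ := by
  unfold phiG
  monoidal

lemma halfBraidingG_tensor_right (u v x y : C) :
    halfBraidingG u v (x ⊗ y) =
      𝟙 _ ⊗≫ u ◁ (β_ v x).hom ▷ y ⊗≫ (u ⊗ x) ◁ (β_ v y).hom ⊗≫ (β_ x u).inv ▷ (y ⊗ v) ⊗≫
        x ◁ (β_ y u).inv ▷ v ⊗≫ 𝟙 _ := by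
  simp only [halfBraidingG, BraidedCategory.braiding_tensor_right_hom,
    BraidedCategory.braiding_tensor_left_inv]
  monoidal

lemma halfBraidingG_tensor_right_comp_phiG (u v x y : C) :
    halfBraidingG u v (x ⊗ y) ≫ phiG x y u v =
      𝟙 _ ⊗≫ u ◁ (β_ v x).hom ▷ y ⊗≫
        ((u ⊗ x) ◁ (β_ v y).hom ≫ (β_ x u).inv ▷ (y ⊗ v)) ⊗≫ 𝟙 _ :=
  calc _ = 𝟙 _ ⊗≫ u ◁ (β_ v x).hom ▷ y ⊗≫
        ((u ⊗ x) ◁ (β_ v y).hom ≫ (β_ x u).inv ▷ (y ⊗ v)) ⊗≫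
          x ◁ ((β_ y u).inv ≫ (β_ y u).hom) ▷ v ⊗≫ 𝟙 _ := by
        rw [halfBraidingG_tensor_right, phiG_eq_whiskerLeft_whiskerRight]
        monoidal
    _ = _ := by
        rw [Iso.inv_hom_id]
        monoidal

/-- `φ` intertwines the braiding `β^{-1}_{u,x} ⊗ β_{v,y}` of `C̄ ⊠ C` with the
half-braiding braiding `c^Z` of the Drinfeld center:
`φ_{x,y,u,v} ∘ c^Z_{u⊗v, x⊗y} = (β_{u,x}^{-1} ⊗ β_{v,y}) ∘ φ_{u,v,x,y}`,
so that `(u, v) ↦ (u ⊗ v, γ_{u⊗v})` is a braided monoidal functor. -/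
theorem phi_intertwines_braidings (u v x y : C) :
    halfBraidingG u v (x ⊗ y) ≫ phiG x y u v =
      phiG u v x y ≫ (tensorHom (β_ x u).inv (β_ v y).hom) := by
  rw [halfBraidingG_tensor_right_comp_phiG, whisker_exchange,
    ← MonoidalCategory.tensorHom_def, phiG_eq_whiskerLeft_whiskerRight]
  monoidal
end
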